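/- Under the same hypotheses, the set function F(S) = Σ_{i,h=1}^m ᾱ_i ᾱ_h y^i y^h (c + Σ_{j∈S} γ x^i_j x^h_j)^d (with F(∅)=0) is monotone nondecreasing: F(S) ≤ F(S ∪ {e}) for all S ⊆ [n] and e ∈ [n] \ S. -/
import Mathlib

/-- A kernel is a Gram kernel if it arises from a finite feature map. -/
def IsGram {m : ℕ} (K : Fin m → Fin m → ℝ) : Prop :=
  ∃ (ι : Type) (_ : Fintype ι) (φ : Fin m → ι → ℝ),
    ∀ i h, K i h = ∑ t, φ i t * φ h t

lemma isGram_const {m : ℕ} {c : ℝ} (hc : 0 ≤ c) :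
    IsGram (fun _ _ : Fin m => c) := by
  refine ⟨Unit, inferInstance, fun _ _ => Real.sqrt c, fun i h => ?_⟩
  simp [Real.mul_self_sqrt hc]

lemma isGram_rank1 {m : ℕ} (v : Fin m → ℝ) :
    IsGram (fun i h => v i * v h) :=
  ⟨Unit, inferInstance, fun i _ => v i, fun i h => by simp⟩

lemma isGram_add {m : ℕ} {K L : Fin m → Fin m → ℝ}
    (hK : IsGram K) (hL : IsGram L) :
    IsGram (fun i h => K i h + L i h) := by
  obtain ⟨ι, iι, φ, hφ⟩ := hK
  obtain ⟨κ, iκ, ψ, hψ⟩ := hL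
  letI := iι; letI := iκ
  refine ⟨ι ⊕ κ, inferInstance, fun i => Sum.elim (φ i) (ψ i), fun i h => ?_⟩
  simp only [hφ, hψ, Fintype.sum_sum_type]
  simp

lemma isGram_mul {m : ℕ} {K L : Fin m → Fin m → ℝ}
    (hK : IsGram K) (hL : IsGram L) :
    IsGram (fun i h => K i h * L i h) := by
  obtain ⟨ι, iι, φ, hφ⟩ := hK
  obtain ⟨κ, iκ, ψ, hψ⟩ := hL
  letI := iι; letI := iκ
  refine ⟨ι × κ, inferInstance, fun i p => φ i p.1 * ψ i p.2, fun i h => ?_⟩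
  simp only [hφ, hψ, Finset.sum_mul_sum, Fintype.sum_prod_type]
  exact Finset.sum_congr rfl fun s _ => Finset.sum_congr rfl fun t _ => by ring

lemma isGram_pow {m : ℕ} {K : Fin m → Fin m → ℝ} (hK : IsGram K) (d : ℕ) :
    IsGram (fun i h => K i h ^ d) := by
  induction d with
  | zero => simpa using isGram_const (m := m) (c := (1:ℝ)) zero_le_one
  | succ k ih => simpa [pow_succ] using isGram_mul ih hK

lemma isGram_finsetSum {m : ℕ} {β : Type} (s : Finset β)
    (K : β → Fin m → Fin m → ℝ) (h : ∀ b ∈ s, IsGram (K b)) :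
    IsGram (fun i j => ∑ b ∈ s, K b i j) := by
  classical
  induction s using Finset.induction with
  | empty => simpa using isGram_const (m := m) (c := (0:ℝ)) le_rfl
  | @insert a s0 hb ih =>
      have h1 : IsGram (K a) := h a (Finset.mem_insert_self _ _)
      have h2 : IsGram (fun i j => ∑ b ∈ s0, K b i j) :=
        ih fun b hbs => h b (Finset.mem_insert_of_mem hbs)
      simpa [Finset.sum_insert hb] using isGram_add h1 h2

lemma isGram_quadForm_nonneg {m : ℕ} {K : Fin m → Fin m → ℝ}
    (hK : IsGram K) (β : Fin m → ℝ) :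
    0 ≤ ∑ i, ∑ h, β i * β h * K i h := by
  obtain ⟨ι, iι, φ, hφ⟩ := hK
  letI := iι
  have key : (∑ i, ∑ h, β i * β h * K i h)
      = ∑ t, (∑ i, β i * φ i t) ^ 2 := by
    calc ∑ i, ∑ h, β i * β h * K i h
        = ∑ i, ∑ h, ∑ t, (β i * φ i t) * (β h * φ h t) := by
          refine Finset.sum_congr rfl fun i _ => Finset.sum_congr rfl fun h _ => ?_
          rw [hφ, Finset.mul_sum]
          exact Finset.sum_congr rfl fun t _ => by ring
      _ = ∑ i, ∑ t, ∑ h, (β i * φ i t) * (β h * φ h t) :=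
          Finset.sum_congr rfl fun i _ => Finset.sum_comm
      _ = ∑ t, ∑ i, ∑ h, (β i * φ i t) * (β h * φ h t) := Finset.sum_comm
      _ = ∑ t, (∑ i, β i * φ i t) ^ 2 := by
          refine Finset.sum_congr rfl fun t _ => ?_
          rw [sq, Finset.sum_mul_sum]
  rw [key]
  exact Finset.sum_nonneg fun t _ => sq_nonneg _

lemma pow_diff_expand (d : ℕ) (a b : ℝ) :
    (a + b) ^ d - a ^ d
      = ∑ k ∈ Finset.range d, a ^ k * b ^ (d - k) * (d.choose k : ℝ) := by
  rw [add_pow, Finset.sum_range_succ]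
  simp

/-- The polynomial-kernel set function `F` is monotone nondecreasing. -/
theorem polynomial_kernel_set_function_monotone
    (m n : ℕ) (x : Fin m → Fin n → ℝ) (y : Fin m → ℝ)
    (hy : ∀ i, y i = 1 ∨ y i = -1) (α : Fin m → ℝ)
    (γ c : ℝ) (hγ : 0 < γ) (hc : 0 ≤ c) (d : ℕ) (hd : 1 ≤ d)
    (F : Finset (Fin n) → ℝ) (hF0 : F ∅ = 0)
    (hF : ∀ S : Finset (Fin n), S ≠ ∅ →
      F S = ∑ i, ∑ h, α i * α h * y i * y h *
        (c + ∑ j ∈ S, γ * x i j * x h j) ^ d) :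
    ∀ S : Finset (Fin n), ∀ e, e ∉ S → F S ≤ F (insert e S) := by
  classical
  set β : Fin m → ℝ := fun i => α i * y i with hβ
  -- the base kernel for any index set is a Gram kernel
  have hAgram : ∀ T : Finset (Fin n),
      IsGram (fun i h : Fin m => c + ∑ j ∈ T, γ * x i j * x h j) := by
    intro T
    have hsum : IsGram (fun i h : Fin m => ∑ j ∈ T, γ * x i j * x h j) := by
      refine isGram_finsetSum T (fun j i h => γ * x i j * x h j) fun j _ => ?_
      have h1 : IsGram (fun i h : Fin m =>
          (Real.sqrt γ * x i j) * (Real.sqrt γ * x h j)) := isGram_rank1 _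
      have heq : ∀ i h : Fin m,
          (Real.sqrt γ * x i j) * (Real.sqrt γ * x h j) = γ * x i j * x h j := by
        intro i h
        rw [show Real.sqrt γ * x i j * (Real.sqrt γ * x h j)
            = (Real.sqrt γ * Real.sqrt γ) * (x i j * x h j) by ring,
          Real.mul_self_sqrt hγ.le]
        ring
      simpa [funext (fun i => funext fun h => heq i h)] using h1
    simpa using isGram_add (isGram_const (m := m) hc) hsum
  intro S e he
  by_cases hS : S = ∅
  · subst hS
    rw [hF0, hF (insert e ∅) (by simp)]
    have h0 := isGram_quadForm_nonneg (isGram_pow (hAgram (insert e ∅)) d) β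
    calc (0:ℝ) ≤ ∑ i, ∑ h, β i * β h * (c + ∑ j ∈ (insert e ∅ : Finset (Fin n)),
          γ * x i j * x h j) ^ d := h0
      _ = _ := by
          refine Finset.sum_congr rfl fun i _ => Finset.sum_congr rfl fun h _ => ?_
          simp only [hβ]; ring
  · have hS' : (insert e S : Finset (Fin n)) ≠ ∅ := by simp
    rw [hF S hS, hF _ hS', ← sub_nonneg, ← Finset.sum_sub_distrib]
    simp only [← Finset.sum_sub_distrib]
    set A : Fin m → Fin m → ℝ := fun i h => c + ∑ j ∈ S, γ * x i j * x h j with hA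
    set b : Fin m → Fin m → ℝ := fun i h => γ * x i e * x h e with hb
    have hbgram : IsGram b := by
      have h1 : IsGram (fun i h : Fin m =>
          (Real.sqrt γ * x i e) * (Real.sqrt γ * x h e)) := isGram_rank1 _
      have heq : ∀ i h : Fin m,
          (Real.sqrt γ * x i e) * (Real.sqrt γ * x h e) = b i h := by
        intro i h
        rw [show Real.sqrt γ * x i e * (Real.sqrt γ * x h e)
            = (Real.sqrt γ * Real.sqrt γ) * (x i e * x h e) by ring,
          Real.mul_self_sqrt hγ.le]
        simp only [hb]
        ring
      simpa [funext (fun i => funext fun h => heq i h)] using h1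
    have hGgram : IsGram (fun i h => ∑ k ∈ Finset.range d,
        A i h ^ k * b i h ^ (d - k) * (d.choose k : ℝ)) := by
      refine isGram_finsetSum _ _ fun k _ => ?_
      exact isGram_mul (isGram_mul (isGram_pow (hAgram S) k) (isGram_pow hbgram (d - k)))
        (isGram_const (Nat.cast_nonneg _))
    have h0 := isGram_quadForm_nonneg hGgram β
    calc (0:ℝ) ≤ ∑ i, ∑ h, β i * β h * ∑ k ∈ Finset.range d,
          A i h ^ k * b i h ^ (d - k) * (d.choose k : ℝ) := h0
      _ = _ := by
          refine Finset.sum_congr rfl fun i _ => Finset.sum_congr rfl fun h _ => ?_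
          rw [← pow_diff_expand d (A i h) (b i h)]
          have hins : (∑ j ∈ insert e S, γ * x i j * x h j)
              = b i h + ∑ j ∈ S, γ * x i j * x h j := Finset.sum_insert he
          rw [hins]
          simp only [hβ, hA, hb]
          ring
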